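/- arXiv:2506.11983 — 2 statements merged into one kernel-verified Lean document; each statement's English description precedes it below -/
import Mathlib

section
/- Let A be a C*-algebra and z ∈ A. There exists w ∈ A such that z* = w (z z*)^{1/4}. Consequently, if I is a closed two-sided ideal of A and z z* ∈ I, then z* ∈ I and hence z* z ∈ I. -/
open scoped NNReal
open Filter Topology

/-!
Put `a = z z* ≥ 0`. For `g` continuous with `g 0 = 0`, the C*-identity gives
`‖z* g(a) - c z*‖² = ‖(t (g t - c)²)(a)‖ ≤ sup_{t ≥ 0} t (g t - c)²`, so every
estimate reduces to a scalar inequality on `[0, ∞)`. With `g_ε(t) = t^{3/4} / (t + ε)` the elements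
`z* g_ε(a)` are Cauchy as `ε → 0` (the scalar bound is `√ε`), and their limit `w` satisfies
`w a^{1/4} = lim z* a (a + ε)⁻¹ = z*`. For the ideal,
`z* a² (a + ε)⁻² = z* · a · a (a + ε)⁻²` lies in `I` and tends to `z*`.

The fourth root is written `√√t`, which keeps these functions continuous on all of `ℝ`.
-/

lemma mul_div_add_sub_one_sq_le {x ε : ℝ} (hx : 0 ≤ x) (hε : 0 < ε) :
    x * (x / (x + ε) - 1) ^ 2 ≤ ε := by
  have hd : 0 < x + ε := by linarith
  rw [show x / (x + ε) - 1 = -(ε / (x + ε)) by field_simp; ring, neg_sq, div_pow,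
    mul_div_assoc', div_le_iff₀ (by positivity)]
  nlinarith [mul_nonneg hx hε.le, mul_nonneg (mul_nonneg hx hε.le) hε.le]

lemma mul_mul_div_add_sq_sub_one_sq_le {x ε : ℝ} (hx : 0 ≤ x) (hε : 0 < ε) :
    x * (x * (x / (x + ε) ^ 2) - 1) ^ 2 ≤ ε := by
  have hd : 0 < x + ε := by linarith
  rw [show x * (x / (x + ε) ^ 2) - 1 = -(ε * (2 * x + ε) / (x + ε) ^ 2) by field_simp; ring,
    neg_sq, div_pow, mul_div_assoc', div_le_iff₀ (by positivity)]
  have h1 : x * ε ≤ (x + ε) ^ 2 / 4 := by nlinarith [sq_nonneg (x - ε)]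
  have h2 : (2 * x + ε) ^ 2 ≤ 4 * (x + ε) ^ 2 := by nlinarith
  calc x * (ε * (2 * x + ε)) ^ 2 = (x * ε) * ε * (2 * x + ε) ^ 2 := by ring
    _ ≤ ((x + ε) ^ 2 / 4) * ε * (4 * (x + ε) ^ 2) := by gcongr
    _ = ε * ((x + ε) ^ 2) ^ 2 := by ring

lemma pow_four_mul_div_sub_div_sq_le {u ε ε' : ℝ} (hu : 0 ≤ u) (hε : 0 < ε)
    (hε' : 0 < ε') :
    u ^ 4 * (u ^ 3 / (u ^ 4 + ε) - u ^ 3 / (u ^ 4 + ε')) ^ 2 ≤ √(max ε ε') := by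
  wlog hεε' : ε ≤ ε' generalizing ε ε'
  · rw [max_comm]
    convert this hε' hε (le_of_not_ge hεε') using 2
    ring
  rw [max_eq_right hεε']
  obtain ⟨s, hs, rfl⟩ : ∃ s, 0 < s ∧ ε' = s ^ 2 :=
    ⟨√ε', Real.sqrt_pos.mpr (by linarith), (Real.sq_sqrt (by linarith)).symm⟩
  rw [Real.sqrt_sq hs.le, div_sub_div _ _ (by positivity) (by positivity), div_pow,
    mul_div_assoc', div_le_iff₀ (by positivity)]
  have h1 : (s ^ 2 - ε) ^ 2 ≤ s ^ 4 := by nlinarith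
  have h2 : u ^ 2 * s ^ 3 ≤ (u ^ 4 + s ^ 2) ^ 2 := by
    nlinarith [mul_nonneg (sq_nonneg (u ^ 2)) (add_nonneg (sq_nonneg (u ^ 2)) (sq_nonneg s)),
      mul_nonneg (sq_nonneg s) (sq_nonneg (u ^ 2 - s)), mul_nonneg (sq_nonneg u) (pow_pos hs 3).le]
  have h3 : u ^ 8 ≤ (u ^ 4 + ε) ^ 2 := by nlinarith [pow_nonneg hu 4]
  calc u ^ 4 * (u ^ 3 * (u ^ 4 + s ^ 2) - (u ^ 4 + ε) * u ^ 3) ^ 2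
      = u ^ 10 * (s ^ 2 - ε) ^ 2 := by ring
    _ ≤ u ^ 8 * u ^ 2 * s ^ 4 := by
        rw [show u ^ 10 = u ^ 8 * u ^ 2 by ring]; gcongr
    _ ≤ (u ^ 4 + ε) ^ 2 * (s * (u ^ 4 + s ^ 2) ^ 2) := by
        rw [show u ^ 8 * u ^ 2 * s ^ 4 = u ^ 8 * (s * (u ^ 2 * s ^ 3)) by ring]
        gcongr
    _ = s * ((u ^ 4 + ε) * (u ^ 4 + s ^ 2)) ^ 2 := by ring

lemma forall_nonneg_of_forall_pow_four {P : ℝ → Prop} (h : ∀ u, 0 ≤ u → P (u ^ 4)) :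
    ∀ t, 0 ≤ t → P t := fun t ht => by
  have h4 : √√t ^ 4 = t := by
    rw [show 4 = 2 * 2 from rfl, pow_mul, Real.sq_sqrt (Real.sqrt_nonneg t), Real.sq_sqrt ht]
  simpa [h4] using h (√√t) (Real.sqrt_nonneg _)

lemma sqrt_sqrt_pow_four {u : ℝ} (hu : 0 ≤ u) : √√(u ^ 4) = u := by
  rw [show u ^ 4 = (u ^ 2) ^ 2 by ring, Real.sqrt_sq (by positivity), Real.sqrt_sq hu]

lemma continuous_sqrt_sqrt_pow_div {k m : ℕ} {ε : ℝ} (hε : 0 < ε) :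
    Continuous fun t => √√t ^ k / (√√t ^ 4 + ε) ^ m :=
  Continuous.div (by fun_prop) (by fun_prop) fun t => by positivity

section
variable {A : Type*} [NonUnitalCStarAlgebra A]

lemma star_mul_self_star_mul_cfcₙ_sub_smul (z : A) {f : ℝ → ℝ} (hf : Continuous f)
    (hf0 : f 0 = 0) (c : ℝ) :
    star (star z * cfcₙ f (z * star z) - c • star z) *
        (star z * cfcₙ f (z * star z) - c • star z) =
      cfcₙ (fun t => t * (f t - c) ^ 2) (z * star z) := by
  set a := z * star z with ha
  have hsa : IsSelfAdjoint a := .mul_star_self z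
  have hexp : (fun t => t * (f t - c) ^ 2)
      = fun t => f t * (t * f t) - (2 * c) * (t * f t) + c ^ 2 * t := by
    funext t; ring
  have hcomm : cfcₙ f a * a = a * cfcₙ f a := by
    simpa only [cfcₙ_id' ℝ a] using (cfcₙ_commute_cfcₙ f (fun t : ℝ => t) a).eq
  rw [hexp, cfcₙ_add .., cfcₙ_sub .., cfcₙ_const_mul .., cfcₙ_const_mul .., cfcₙ_mul f ..,
    cfcₙ_mul _ f, cfcₙ_id' ℝ a, star_sub, star_mul, star_star, (cfcₙ_predicate f a).star_eq,
    star_smul, star_star, star_trivial]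
  simp only [sub_mul, mul_sub, smul_mul_assoc, mul_smul_comm, ← mul_assoc]
  rw [ha] at hcomm ⊢
  simp only [mul_assoc, hcomm]
  module

variable [PartialOrder A] [StarOrderedRing A]

lemma norm_star_mul_cfcₙ_sub_smul_sq_le (z : A) {f : ℝ → ℝ} (hf : Continuous f)
    (hf0 : f 0 = 0) {c C : ℝ} (h : ∀ t, 0 ≤ t → t * (f t - c) ^ 2 ≤ C) :
    ‖star z * cfcₙ f (z * star z) - c • star z‖ ^ 2 ≤ C := by
  rw [sq, ← CStarRing.norm_star_mul_self, star_mul_self_star_mul_cfcₙ_sub_smul z hf hf0]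
  refine norm_cfcₙ_le fun t ht => ?_
  have ht₀ : 0 ≤ t := quasispectrum_nonneg_of_nonneg _ (mul_star_self_nonneg z) t ht
  rw [Real.norm_of_nonneg (by positivity)]
  exact h t ht₀

lemma cauchySeq_star_mul_cfcₙ (z : A) {f : ℕ → ℝ → ℝ} (hf : ∀ n, Continuous (f n))
    (hf0 : ∀ n, f n 0 = 0) {b : ℕ → ℝ} (hb : Tendsto b atTop (𝓝 0))
    (h : ∀ N n m, N ≤ n → N ≤ m → ∀ t, 0 ≤ t → t * (f n t - f m t) ^ 2 ≤ b N) :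
    CauchySeq fun n => star z * cfcₙ (f n) (z * star z) := by
  refine cauchySeq_of_le_tendsto_0 (fun N => √(b N)) (fun n m N hn hm => ?_) ?_
  · have := norm_star_mul_cfcₙ_sub_smul_sq_le z (f := fun t => f n t - f m t)
      ((hf n).sub (hf m)) (by simp [hf0]) (c := 0) (by simpa using h N n m hn hm)
    rw [dist_eq_norm, ← mul_sub, ← cfcₙ_sub (f n) (f m) _]
    simpa using Real.le_sqrt_of_sq_le this
  · simpa using hb.sqrt

lemma tendsto_star_mul_cfcₙ (z : A) {f : ℕ → ℝ → ℝ} (hf : ∀ n, Continuous (f n))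
    (hf0 : ∀ n, f n 0 = 0) {b : ℕ → ℝ} (hb : Tendsto b atTop (𝓝 0))
    (h : ∀ n t, 0 ≤ t → t * (f n t - 1) ^ 2 ≤ b n) :
    Tendsto (fun n => star z * cfcₙ (f n) (z * star z)) atTop (𝓝 (star z)) := by
  rw [tendsto_iff_norm_sub_tendsto_zero]
  refine squeeze_zero (fun n => norm_nonneg _) (fun n => ?_) (by simpa using hb.sqrt)
  simpa using Real.le_sqrt_of_sq_le (norm_star_mul_cfcₙ_sub_smul_sq_le z (hf n) (hf0 n) (h n))

lemma nnrpow_one_div_four_eq_cfcₙ_sqrt_sqrt {a : A} (ha : 0 ≤ a) :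
    a ^ (1 / 4 : ℝ≥0) = cfcₙ (fun t => √√t) a := by
  rw [CFC.nnrpow_eq_cfcₙ_real a _ ha]
  refine cfcₙ_congr fun t ht => ?_
  have ht₀ : 0 ≤ t := quasispectrum_nonneg_of_nonneg a ha t ht
  rw [Real.sqrt_eq_rpow, Real.sqrt_eq_rpow, ← Real.rpow_mul ht₀]
  norm_num

lemma cauchySeq_star_mul_cfcₙ_resolvent (z : A) :
    CauchySeq fun n : ℕ =>
      star z * cfcₙ (fun t => √√t ^ 3 / (√√t ^ 4 + 1 / ((n : ℝ) + 1))) (z * star z) := by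
  refine cauchySeq_star_mul_cfcₙ z
    (fun n => by simpa using continuous_sqrt_sqrt_pow_div (k := 3) (m := 1) Nat.one_div_pos_of_nat)
    (fun n => by simp) (b := fun N => √(1 / ((N : ℝ) + 1)))
    (by simpa using tendsto_one_div_add_atTop_nhds_zero_nat.sqrt) fun N n m hn hm => ?_
  refine forall_nonneg_of_forall_pow_four fun u hu => ?_
  rw [sqrt_sqrt_pow_four hu]
  refine (pow_four_mul_div_sub_div_sq_le hu Nat.one_div_pos_of_nat Nat.one_div_pos_of_nat).trans ?_
  exact Real.sqrt_le_sqrt (max_le (Nat.one_div_le_one_div hn) (Nat.one_div_le_one_div hm))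

lemma tendsto_star_mul_cfcₙ_resolvent_mul_nnrpow (z : A) :
    Tendsto (fun n : ℕ =>
      star z * cfcₙ (fun t => √√t ^ 3 / (√√t ^ 4 + 1 / ((n : ℝ) + 1))) (z * star z) *
        (z * star z) ^ (1 / 4 : ℝ≥0)) atTop (𝓝 (star z)) := by
  have hG (n : ℕ) : Continuous fun t => √√t ^ 3 / (√√t ^ 4 + 1 / ((n : ℝ) + 1)) := by
    simpa using continuous_sqrt_sqrt_pow_div (k := 3) (m := 1) Nat.one_div_pos_of_nat
  refine (tendsto_star_mul_cfcₙ z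
    (f := fun n t => √√t ^ 3 / (√√t ^ 4 + 1 / ((n : ℝ) + 1)) * √√t)
    (fun n => (hG n).mul (by fun_prop)) (fun n => by simp)
    tendsto_one_div_add_atTop_nhds_zero_nat fun n => forall_nonneg_of_forall_pow_four
      fun u hu => ?_).congr fun n => ?_
  · rw [sqrt_sqrt_pow_four hu, div_mul_eq_mul_div, ← pow_succ]
    exact mul_div_add_sub_one_sq_le (by positivity) Nat.one_div_pos_of_nat
  · rw [nnrpow_one_div_four_eq_cfcₙ_sqrt_sqrt (mul_star_self_nonneg z), mul_assoc,
      ← cfcₙ_mul _ _ _ (hG n).continuousOn]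

lemma star_mem_of_mul_star_mem (z : A) {I : TwoSidedIdeal A} (hI : IsClosed (I : Set A))
    (hz : z * star z ∈ I) : star z ∈ I := by
  have hK (n : ℕ) : Continuous fun t => √√t ^ 4 / (√√t ^ 4 + 1 / ((n : ℝ) + 1)) ^ 2 :=
    continuous_sqrt_sqrt_pow_div Nat.one_div_pos_of_nat
  refine hI.mem_of_tendsto (tendsto_star_mul_cfcₙ z
    (f := fun n t => t * (√√t ^ 4 / (√√t ^ 4 + 1 / ((n : ℝ) + 1)) ^ 2))
    (fun n => continuous_id.mul (hK n)) (fun n => by simp) tendsto_one_div_add_atTop_nhds_zero_nat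
    fun n => forall_nonneg_of_forall_pow_four fun u hu => ?_) (.of_forall fun n => ?_)
  · rw [sqrt_sqrt_pow_four hu]
    exact mul_mul_div_add_sq_sub_one_sq_le (by positivity) Nat.one_div_pos_of_nat
  · rw [cfcₙ_mul (fun t => t) _ _ continuous_id'.continuousOn rfl (hK n).continuousOn,
      cfcₙ_id' ℝ (z * star z)]
    exact I.mul_mem_left _ _ (I.mul_mem_right _ _ hz)
end

/-- Polar-decomposition-type factorization: for any `z` in a C*-algebra `A` there is `w ∈ A`
with `z* = w (z z*)^{1/4}`.  Consequently, if `I` is a closed two-sided ideal and `z z* ∈ I`,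
then `z* ∈ I` and `z* z ∈ I`. -/
theorem polar_factorization_quarter_power
    (A : Type*) [NonUnitalCStarAlgebra A] [PartialOrder A] [StarOrderedRing A] (z : A) :
    (∃ w : A, star z = w * CFC.nnrpow (z * star z) (1/4 : ℝ≥0)) ∧
    ∀ I : TwoSidedIdeal A, IsClosed (I : Set A) → z * star z ∈ I →
      star z ∈ I ∧ star z * z ∈ I := by
  obtain ⟨w, hw⟩ := cauchySeq_tendsto_of_complete (cauchySeq_star_mul_cfcₙ_resolvent z)
  refine ⟨⟨w, tendsto_nhds_unique (tendsto_star_mul_cfcₙ_resolvent_mul_nnrpow z)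
    (hw.mul_const _)⟩, fun I hI hz => ?_⟩
  have hzI := star_mem_of_mul_star_mem z hI hz
  exact ⟨hzI, I.mul_mem_right _ _ hzI⟩
end

section
/- Let J be a σ-unital C*-algebra with approximate unit (eₖ) and D a unital C*-algebra (working in J† ⊗ D where J† is the unitization). Let y = z + 1 ⊗ d with z ∈ J ⊗ D and d ∈ D₊ non-zero. Then for every ε > 0 and n ∈ ℕ there exist k ≥ n and a positive contraction v ∈ J† ⊗ D with ‖v* y v − (1 − e_k) ⊗ d‖ < 2ε. -/
/-!
Put `s := 1 - √(1 - e_{k+1}) ∈ J` (non-unital functional calculus) and `v := 1 - s ⊗ 1`, the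
model of `(1 - e_{k+1})^{1/2} ⊗ 1`; it is a positive contraction. Since `2s - s² = e_{k+1}`,
`v (1 ⊗ d) v = (1 - e_{k+1}) ⊗ d` exactly, so the error is `v z v`. From `e_{k+1} e_k = e_k`
one gets `s e_k = e_k`, hence `v` annihilates `e_k a ⊗ y` and
`‖v (a ⊗ y) v‖ ≤ ‖a - e_k a‖ ‖y‖ → 0`. The maps `x ↦ v x v` are contractions, so `v z v → 0`
for all `z` in the closed span of elementary tensors.
-/

open Filter Topology

section CFC

variable {J : Type*} [NonUnitalCStarAlgebra J] [PartialOrder J] [StarOrderedRing J]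

lemma quasispectrum_subset_Icc_of_nonneg_of_norm_le_one {b : J} (hb : 0 ≤ b)
    (hb1 : ‖b‖ ≤ 1) : quasispectrum ℝ b ⊆ Set.Icc 0 1 := fun x hx =>
  ⟨quasispectrum_nonneg_of_nonneg b hb x hx,
    (le_abs_self x).trans <| (NonUnitalIsometricContinuousFunctionalCalculus.norm_quasispectrum_le
      b hx).trans hb1⟩

noncomputable def oneSubSqrtOneSub (b : J) : J := cfcₙ (fun x : ℝ => 1 - √(1 - x)) b

variable {b : J}

lemma oneSubSqrtOneSub_nonneg (hb : 0 ≤ b) (hb1 : ‖b‖ ≤ 1) : 0 ≤ oneSubSqrtOneSub b :=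
  cfcₙ_nonneg fun x hx => by
    obtain ⟨hx0, -⟩ := quasispectrum_subset_Icc_of_nonneg_of_norm_le_one hb hb1 hx
    simp only [sub_nonneg, Real.sqrt_le_one]
    linarith

lemma norm_oneSubSqrtOneSub_le_one (hb : 0 ≤ b) (hb1 : ‖b‖ ≤ 1) :
    ‖oneSubSqrtOneSub b‖ ≤ 1 :=
  norm_cfcₙ_le fun x hx => by
    obtain ⟨hx0, hx1⟩ := quasispectrum_subset_Icc_of_nonneg_of_norm_le_one hb hb1 hx
    have hsqrt : √(1 - x) ≤ 1 := Real.sqrt_le_one.mpr (by linarith)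
    rw [Real.norm_eq_abs, abs_le]
    constructor <;> linarith [Real.sqrt_nonneg (1 - x)]

lemma oneSubSqrtOneSub_add_sub_mul_self (hb : 0 ≤ b) (hb1 : ‖b‖ ≤ 1) :
    oneSubSqrtOneSub b + oneSubSqrtOneSub b - oneSubSqrtOneSub b * oneSubSqrtOneSub b = b := by
  unfold oneSubSqrtOneSub
  rw [← cfcₙ_add .., ← cfcₙ_mul .., ← cfcₙ_sub ..]
  conv_rhs => rw [← cfcₙ_id' ℝ b]
  refine cfcₙ_congr fun x hx => ?_
  obtain ⟨-, hx1⟩ := quasispectrum_subset_Icc_of_nonneg_of_norm_le_one hb hb1 hx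
  have hs : √(1 - x) ^ 2 = 1 - x := Real.sq_sqrt (by linarith)
  linear_combination -hs

end CFC

/-- In the unitization the hypothesis reads `(1 - s)² c = 0`, and then
`‖(1 - s) c‖² = ‖c* (1 - s)² c‖ = 0`. -/
lemma IsSelfAdjoint.mul_eq_of_add_sub_mul_self_mul_eq {A : Type*} [NonUnitalNormedRing A]
    [StarRing A] [CStarRing A] {s c : A} (hs : IsSelfAdjoint s) (h : (s + s - s * s) * c = c) :
    s * c = c := by
  have hzero : star (c - s * c) * (c - s * c) = 0 := by
    calc star (c - s * c) * (c - s * c) = star c * c - star c * ((s + s - s * s) * c) := by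
          rw [star_sub, star_mul, hs.star_eq]; noncomm_ring
      _ = 0 := by rw [h, sub_self]
  exact (sub_eq_zero.mp (CStarRing.star_mul_self_eq_zero_iff _ |>.mp hzero)).symm

lemma CStarAlgebra.one_sub_nonneg_and_norm_one_sub_le_one {A : Type*} [CStarAlgebra A]
    [PartialOrder A] [StarOrderedRing A] {u : A} (hu : 0 ≤ u) (hu1 : ‖u‖ ≤ 1) :
    0 ≤ 1 - u ∧ ‖1 - u‖ ≤ 1 := by
  have hv : 0 ≤ 1 - u := sub_nonneg.mpr ((CStarAlgebra.norm_le_one_iff_of_nonneg u).mp hu1)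
  exact ⟨hv, (CStarAlgebra.norm_le_one_iff_of_nonneg _).mpr (sub_le_self 1 hu)⟩

lemma CStarRing.norm_one_le {A : Type*} [NormedRing A] [StarRing A] [CStarRing A] :
    ‖(1 : A)‖ ≤ 1 := by
  nontriviality A
  exact CStarRing.norm_one.le

lemma tendsto_mul_mul_zero_of_mem_closure_span {𝕜 T ι : Type*} [NormedField 𝕜] [NormedRing T]
    [NormedAlgebra 𝕜 T] {l : Filter ι} {V : ι → T} (hV : ∀ i, ‖V i‖ ≤ 1) {G : Set T}
    (hG : ∀ x ∈ G, Tendsto (fun i => V i * x * V i) l (𝓝 0)) {z : T}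
    (hz : z ∈ closure (Submodule.span 𝕜 G : Set T)) :
    Tendsto (fun i => V i * z * V i) l (𝓝 0) := by
  let S : Submodule 𝕜 T :=
    { carrier := {w | Tendsto (fun i => V i * w * V i) l (𝓝 0)}
      zero_mem' := by simpa using tendsto_const_nhds
      add_mem' := fun {x y} hx hy => by simpa [mul_add, add_mul] using hx.add hy
      smul_mem' := fun c x hx => by simpa using hx.const_smul c }
  have hlip : ∀ i, LipschitzWith 1 fun w : T => V i * w * V i := fun i =>
    LipschitzWith.of_dist_le_mul fun x y => by
      rw [dist_eq_norm, dist_eq_norm, ← sub_mul, ← mul_sub, NNReal.coe_one, one_mul]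
      calc ‖V i * (x - y) * V i‖ ≤ ‖V i‖ * ‖x - y‖ * ‖V i‖ := norm_mul₃_le
        _ ≤ 1 * ‖x - y‖ * 1 := by gcongr <;> exact hV i
        _ = ‖x - y‖ := by ring
  have hclosed : IsClosed (S : Set T) :=
    (LipschitzWith.uniformEquicontinuous _ 1 hlip).equicontinuous
      |>.isClosed_setOfPred_tendsto continuous_const
  exact closure_minimal (Submodule.span_le.mpr fun x hx => hG x hx) hclosed hz

lemma map_sub_left_of_map_add_left {J D T : Type*} [AddGroup J] [AddCommGroup T]
    (m : J → D → T) (hm_addl : ∀ a b y, m (a + b) y = m a y + m b y) (a b : J) (y : D) :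
    m (a - b) y = m a y - m b y :=
  eq_sub_of_add_eq (by rw [← hm_addl, sub_add_cancel])

section Algebraic

variable {J D T : Type*} [NonUnitalRing J] [Ring D] [Ring T] (m : J → D → T)

lemma one_sub_map_one_mul_map_mul_left_eq_zero
    (hm_mul : ∀ a b y z, m a y * m b z = m (a * b) (y * z)) {s c : J} (hsc : s * c = c)
    (a : J) (y : D) : (1 - m s 1) * m (c * a) y = 0 := by
  rw [sub_mul, one_mul, hm_mul, one_mul, ← mul_assoc, hsc, sub_self]

lemma one_sub_map_one_mul_embedding_mul_one_sub_map_one (ι : D → T)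
    (hm_addl : ∀ a b y, m (a + b) y = m a y + m b y)
    (hm_mul : ∀ a b y z, m a y * m b z = m (a * b) (y * z))
    (hm_compl : ∀ a y d', m a y * ι d' = m a (y * d'))
    (hm_compr : ∀ a y d', ι d' * m a y = m a (d' * y)) (s : J) (d : D) :
    (1 - m s 1) * ι d * (1 - m s 1) = ι d - m (s + s - s * s) d := by
  simp only [hm_addl, map_sub_left_of_map_add_left m hm_addl, sub_mul, mul_sub, one_mul,
    mul_one, hm_mul, hm_compl, hm_compr]
  abel

end Algebraic

lemma map_one_nonneg_of_nonneg {J D T : Type*} [NonUnitalCStarAlgebra J] [PartialOrder J]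
    [StarOrderedRing J] [Ring D] [StarRing D] [NonUnitalRing T] [StarRing T] [PartialOrder T]
    [StarOrderedRing T] (m : J → D → T)
    (hm_mul : ∀ a b y z, m a y * m b z = m (a * b) (y * z))
    (hm_star : ∀ a y, star (m a y) = m (star a) (star y)) {a : J} (ha : 0 ≤ a) :
    0 ≤ m a 1 := by
  obtain ⟨r, rfl⟩ := CStarAlgebra.nonneg_iff_eq_star_mul_self.mp ha
  have hsq : m (star r * r) 1 = star (m r 1) * m r 1 := by
    rw [hm_star, star_one, hm_mul, one_mul]
  exact hsq ▸ star_mul_self_nonneg _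

section Normed

variable {J D T : Type*} [NonUnitalNormedRing J] [NormedRing D] [NormedRing T]
  (m : J → D → T)

lemma norm_one_sub_map_one_mul_map_mul_one_sub_map_one_le
    (hm_addl : ∀ a b y, m (a + b) y = m a y + m b y)
    (hm_mul : ∀ a b y z, m a y * m b z = m (a * b) (y * z))
    (hm_norm : ∀ a y, ‖m a y‖ = ‖a‖ * ‖y‖) {s c : J} (hsc : s * c = c)
    (hv : ‖1 - m s 1‖ ≤ 1) (a : J) (y : D) :
    ‖(1 - m s 1) * m a y * (1 - m s 1)‖ ≤ ‖a - c * a‖ * ‖y‖ := by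
  have hcut : (1 - m s 1) * m a y = (1 - m s 1) * m (a - c * a) y := by
    rw [map_sub_left_of_map_add_left m hm_addl, mul_sub,
      one_sub_map_one_mul_map_mul_left_eq_zero m hm_mul hsc, sub_zero]
  calc ‖(1 - m s 1) * m a y * (1 - m s 1)‖
      = ‖(1 - m s 1) * m (a - c * a) y * (1 - m s 1)‖ := by rw [hcut]
    _ ≤ ‖1 - m s 1‖ * ‖m (a - c * a) y‖ * ‖1 - m s 1‖ := norm_mul₃_le
    _ ≤ 1 * (‖a - c * a‖ * ‖y‖) * 1 := by rw [hm_norm]; gcongr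
    _ = ‖a - c * a‖ * ‖y‖ := by ring

lemma tendsto_one_sub_map_one_mul_map_mul_one_sub_map_one {ι : Type*} {l : Filter ι}
    (hm_addl : ∀ a b y, m (a + b) y = m a y + m b y)
    (hm_mul : ∀ a b y z, m a y * m b z = m (a * b) (y * z))
    (hm_norm : ∀ a y, ‖m a y‖ = ‖a‖ * ‖y‖) {s c : ι → J}
    (hsc : ∀ i, s i * c i = c i) (hv : ∀ i, ‖1 - m (s i) 1‖ ≤ 1)
    (hc : ∀ a, Tendsto (fun i => c i * a) l (𝓝 a)) (a : J) (y : D) :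
    Tendsto (fun i => (1 - m (s i) 1) * m a y * (1 - m (s i) 1)) l (𝓝 0) := by
  refine squeeze_zero_norm (fun i => norm_one_sub_map_one_mul_map_mul_one_sub_map_one_le
    m hm_addl hm_mul hm_norm (hsc i) (hv i) a y) ?_
  simpa using ((tendsto_const_nhds (x := a)).sub (hc a)).norm.mul_const ‖y‖

end Normed

theorem conjugate_to_corner_estimate_general
    (J D T : Type*) [NonUnitalCStarAlgebra J] [PartialOrder J] [StarOrderedRing J]
    [CStarAlgebra D] [PartialOrder D] [StarOrderedRing D]
    [CStarAlgebra T] [PartialOrder T] [StarOrderedRing T]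
    (m : J → D → T) (ιD : D →⋆ₐ[ℂ] T)
    (hm_addl : ∀ a b y, m (a + b) y = m a y + m b y)
    (hm_mul : ∀ a b y z, m a y * m b z = m (a * b) (y * z))
    (hm_star : ∀ a y, star (m a y) = m (star a) (star y))
    (hm_norm : ∀ a y, ‖m a y‖ = ‖a‖ * ‖y‖)
    (hm_compl : ∀ a y d', m a y * ιD d' = m a (y * d'))
    (hm_compr : ∀ a y d', ιD d' * m a y = m a (d' * y))
    (e : ℕ → J) (hepos : ∀ k, 0 ≤ e k) (henorm : ∀ k, ‖e k‖ ≤ 1)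
    (heprod : ∀ k, e (k + 1) * e k = e k)
    (happrox : ∀ x : J, Filter.Tendsto (fun k => e k * x) Filter.atTop (nhds x))
    (z : T)
    (hz : z ∈ closure (Submodule.span ℂ (Set.range fun p : J × D => m p.1 p.2) : Set T))
    (d : D) :
    ∀ ε > (0 : ℝ), ∀ n : ℕ, ∃ k ≥ n, ∃ v : T, 0 ≤ v ∧ ‖v‖ ≤ 1 ∧
      ‖star v * (z + ιD d) * v - (ιD d - m (e k) d)‖ < 2 * ε := by
  intro ε hε n
  set s : ℕ → J := fun k => oneSubSqrtOneSub (e (k + 1))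
  have hs_corner k : s k + s k - s k * s k = e (k + 1) :=
    oneSubSqrtOneSub_add_sub_mul_self (hepos _) (henorm _)
  have hs_nonneg k : 0 ≤ s k := oneSubSqrtOneSub_nonneg (hepos _) (henorm _)
  have hs_unit k : s k * e k = e k :=
    (hs_nonneg k).isSelfAdjoint.mul_eq_of_add_sub_mul_self_mul_eq (by rw [hs_corner, heprod])
  have hv k : 0 ≤ 1 - m (s k) 1 ∧ ‖1 - m (s k) 1‖ ≤ 1 := by
    refine CStarAlgebra.one_sub_nonneg_and_norm_one_sub_le_one
      (map_one_nonneg_of_nonneg m hm_mul hm_star (hs_nonneg k)) ?_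
    rw [hm_norm]
    exact mul_le_one₀ (norm_oneSubSqrtOneSub_le_one (hepos _) (henorm _)) (norm_nonneg _)
      CStarRing.norm_one_le
  have hlim : Tendsto (fun k => (1 - m (s k) 1) * z * (1 - m (s k) 1)) atTop (𝓝 0) :=
    tendsto_mul_mul_zero_of_mem_closure_span (fun k => (hv k).2) (by
      rintro _ ⟨p, rfl⟩
      exact tendsto_one_sub_map_one_mul_map_mul_one_sub_map_one m hm_addl hm_mul hm_norm
        hs_unit (fun k => (hv k).2) happrox p.1 p.2) hz
  obtain ⟨k, hk, hkn⟩ :=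
    ((Metric.tendsto_nhds.mp hlim (2 * ε) (by positivity)).and (eventually_ge_atTop n)).exists
  refine ⟨k + 1, by omega, 1 - m (s k) 1, (hv k).1, (hv k).2, ?_⟩
  rw [(hv k).1.isSelfAdjoint.star_eq, mul_add, add_mul,
    one_sub_map_one_mul_embedding_mul_one_sub_map_one m ιD hm_addl hm_mul hm_compl hm_compr,
    hs_corner, add_sub_cancel_right]
  rwa [dist_zero_right] at hk

/-- For `y = z + 1 ⊗ d` in `J† ⊗ D` (`z ∈ J ⊗ D`, `d ∈ D₊` non-zero), every `ε > 0` and `n` admit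
`k ≥ n` and a positive contraction `v` with `‖v* y v − (1 − e_k) ⊗ d‖ < 2ε`.  The tensor product
is modelled by a unital C*-algebra `T` with a bilinear multiplicative star-preserving map
`m : J → D → T` on the ideal part and a unital embedding `ιD : D → T` giving the `1 ⊗ d` part. -/
theorem conjugate_to_corner_estimate
    (J D T : Type*) [NonUnitalCStarAlgebra J] [PartialOrder J] [StarOrderedRing J]
    [CStarAlgebra D] [PartialOrder D] [StarOrderedRing D]
    [CStarAlgebra T] [PartialOrder T] [StarOrderedRing T]
    (m : J → D → T) (ιD : D →⋆ₐ[ℂ] T)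
    (hm_addl : ∀ a b y, m (a + b) y = m a y + m b y)
    (hm_addr : ∀ a y z, m a (y + z) = m a y + m a z)
    (hm_mul : ∀ a b y z, m a y * m b z = m (a * b) (y * z))
    (hm_star : ∀ a y, star (m a y) = m (star a) (star y))
    (hm_norm : ∀ a y, ‖m a y‖ = ‖a‖ * ‖y‖)
    (hm_compl : ∀ a y d', m a y * ιD d' = m a (y * d'))
    (hm_compr : ∀ a y d', ιD d' * m a y = m a (d' * y))
    (e : ℕ → J) (hepos : ∀ k, 0 ≤ e k) (henorm : ∀ k, ‖e k‖ ≤ 1)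
    (heprod : ∀ k, e (k + 1) * e k = e k)
    (happrox : ∀ x : J, Filter.Tendsto (fun k => e k * x) Filter.atTop (nhds x))
    (z : T)
    (hz : z ∈ closure (Submodule.span ℂ (Set.range fun p : J × D => m p.1 p.2) : Set T))
    (d : D) (hd : 0 ≤ d) (hd0 : d ≠ 0) :
    ∀ ε > (0 : ℝ), ∀ n : ℕ, ∃ k ≥ n, ∃ v : T, 0 ≤ v ∧ ‖v‖ ≤ 1 ∧
      ‖star v * (z + ιD d) * v - (ιD d - m (e k) d)‖ < 2 * ε :=
  conjugate_to_corner_estimate_general J D T m ιD hm_addl hm_mul hm_star hm_norm hm_compl hm_compr e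
    hepos henorm heprod happrox z hz d
end
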